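/- arXiv:0712.1662 — 2 statements merged into one kernel-verified Lean document; each statement's English description precedes it below -/
import Mathlib

section
/- Let V_cc be a finite set of links, where each link v has a transmitter t(v) and receiver r(v) in the plane, with positive distances. Define N(v) = (N0·γ/P)·d(t(v),r(v))^α and for distinct links u,v define w(u,v) = max(0, 1 - γ·d(t(v),r(v))^α / d(t(u),r(v))^α). If for every v ∈ V_cc we have ∑_{u ∈ V_cc, u ≠ v} w(u,v) > |V_cc| + N(v) - 2, then for every v ∈ V_cc the SINR condition holds: (P / d(t(v),r(v))^α) / (N0 + ∑_{u ≠ v} P / d(t(u),r(v))^α) > γ. -/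
/-!
Fix a receiver `v` and write `xᵤ = γ·d(t v, r v)^α / d(t u, r v)^α` for its normalized
interference from `u`. Since `1 - max 0 (1 - x) = min 1 x`, the hypothesis says
`∑ᵤ min 1 xᵤ < 1 - N(v) ≤ 1`; then no `xᵤ` reaches `1`, so the truncation is void and
`N(v) + ∑ᵤ xᵤ < 1`. Multiplying by `P / d(t v, r v)^α` this is exactly
`γ·(N0 + ∑ᵤ P / d(t u, r v)^α) < P / d(t v, r v)^α`.
-/

open Finset

section Truncation

variable {R : Type*} [CommRing R] [LinearOrder R] [IsStrictOrderedRing R]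

theorem one_sub_max_zero_one_sub (x : R) : 1 - max 0 (1 - x) = min 1 x := by
  rw [← min_sub_sub_left, sub_zero, sub_sub_cancel]

theorem Finset.sum_lt_of_lt_sum_max_zero_one_sub {ι : Type*} {s : Finset ι} {x : ι → R} {c : R}
    (hx : ∀ i ∈ s, 0 ≤ x i) (hc : c ≤ 1) (h : (#s : R) - c < ∑ i ∈ s, max 0 (1 - x i)) :
    ∑ i ∈ s, x i < c := by
  have hmin : ∑ i ∈ s, min 1 (x i) < c := by
    have hcompl : ∑ i ∈ s, min 1 (x i) = #s - ∑ i ∈ s, max 0 (1 - x i) := by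
      simp only [← one_sub_max_zero_one_sub, sum_sub_distrib, sum_const, nsmul_one]
    linarith
  have hlt : ∀ i ∈ s, x i < 1 := by
    intro i hi
    by_contra! hge
    have := single_le_sum (f := fun j ↦ min 1 (x j))
      (fun j hj ↦ le_min zero_le_one (hx j hj)) hi
    simp only [min_eq_left hge] at this
    linarith
  rwa [sum_congr rfl fun i hi ↦ min_eq_right (hlt i hi).le] at hmin

end Truncation

theorem sinr_gt_of_sum_weight_gt {ι : Type*} {s : Finset ι} {a : ι → ℝ} {P N0 γ D : ℝ}
    (hP : 0 < P) (hN0 : 0 < N0) (hγ : 0 < γ) (hD : 0 < D) (ha : ∀ u ∈ s, 0 < a u)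
    (h : (#s : ℝ) + N0 * γ / P * D - 1 < ∑ u ∈ s, max 0 (1 - γ * D / a u)) :
    γ < (P / D) / (N0 + ∑ u ∈ s, P / a u) := by
  have hx : ∀ u ∈ s, 0 ≤ γ * D / a u := fun u hu ↦ by have := ha u hu; positivity
  have hnoise : 0 < N0 * γ / P * D := by positivity
  have hsum : N0 * γ / P * D + ∑ u ∈ s, γ * D / a u < 1 := by
    have := sum_lt_of_lt_sum_max_zero_one_sub hx (c := 1 - N0 * γ / P * D)
      (by linarith) (by linarith)
    linarith
  have hinterf : 0 ≤ ∑ u ∈ s, P / a u :=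
    sum_nonneg fun u hu ↦ (div_pos hP (ha u hu)).le
  have hscale : γ * (N0 + ∑ u ∈ s, P / a u)
      = P / D * (N0 * γ / P * D + ∑ u ∈ s, γ * D / a u) := by
    rw [mul_add, mul_add, mul_sum, mul_sum]
    congr 1
    · field_simp
    · refine sum_congr rfl fun u hu ↦ ?_
      have := (ha u hu).ne'
      field_simp
  rw [lt_div_iff₀ (by positivity), hscale]
  calc P / D * (N0 * γ / P * D + ∑ u ∈ s, γ * D / a u) < P / D * 1 := by gcongr
    _ = P / D := mul_one _

theorem lgls_feasible_general
    {ι : Type*} [DecidableEq ι] (V : Finset ι)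
    (t r : ι → EuclideanSpace ℝ (Fin 2))
    (P N0 γ α : ℝ) (hP : 0 < P) (hN0 : 0 < N0) (hγ : 0 < γ)
    (hd : ∀ u ∈ V, ∀ v ∈ V, 0 < dist (t u) (r v))
    (h : ∀ v ∈ V,
      ∑ u ∈ V.erase v, max 0 (1 - γ * dist (t v) (r v) ^ α / dist (t u) (r v) ^ α)
        > (V.card : ℝ) + (N0 * γ / P) * dist (t v) (r v) ^ α - 2) :
    ∀ v ∈ V,
      (P / dist (t v) (r v) ^ α) /
        (N0 + ∑ u ∈ V.erase v, P / dist (t u) (r v) ^ α) > γ := by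
  intro v hv
  have hcard : (#(V.erase v) : ℝ) = #V - 1 := cast_card_erase_of_mem hv
  refine sinr_gt_of_sum_weight_gt hP hN0 hγ (Real.rpow_pos_of_pos (hd v hv v hv) _)
    (fun u hu ↦ Real.rpow_pos_of_pos (hd u (mem_of_mem_erase hu) v hv) _) ?_
  rw [hcard]
  linarith [h v hv]

/-- LGLS correctness (Theorem 1, no shared nodes case): if for every link `v` in the
finite co-colored set `V`, the sum of co-schedulability weights
`w'(u,v) = max 0 (1 - γ·d(t v, r v)^α / d(t u, r v)^α)` over the other links exceeds
`|V| + N(v) - 2`, where `N(v) = (N0·γ/P)·d(t v, r v)^α`, then the SINR condition holds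
at every receiver. -/
theorem lgls_feasible
    {ι : Type*} [DecidableEq ι] (V : Finset ι)
    (t r : ι → EuclideanSpace ℝ (Fin 2))
    (P N0 γ α : ℝ) (hP : 0 < P) (hN0 : 0 < N0) (hγ : 0 < γ) (hα : 0 < α)
    (hd : ∀ u ∈ V, ∀ v ∈ V, 0 < dist (t u) (r v))
    (h : ∀ v ∈ V,
      ∑ u ∈ V.erase v, max 0 (1 - γ * dist (t v) (r v) ^ α / dist (t u) (r v) ^ α)
        > (V.card : ℝ) + (N0 * γ / P) * dist (t v) (r v) ^ α - 2) :
    ∀ v ∈ V,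
      (P / dist (t v) (r v) ^ α) /
        (N0 + ∑ u ∈ V.erase v, P / dist (t u) (r v) ^ α) > γ :=
  lgls_feasible_general V t r P N0 γ α hP hN0 hγ hd h
end

section
/- Let V_cc be a finite set of links such that ∑_{u ∈ V_cc, u ≠ v} w'(u,v) > |V_cc| + N(v) - 2 for all v ∈ V_cc, where w'(u,v) = max(0, 1 - w(u,v)), w(u,v) ≥ 0, w(u,v) = 1 whenever links u and v share a node in the communication graph, and N(v) ≥ 0. Then no two distinct links in V_cc share a node. -/
theorem Finset.sum_le_card_sub_one_of_le_one {ι R : Type*} [Ring R] [PartialOrder R]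
    [IsOrderedRing R] [DecidableEq ι] {s : Finset ι} {f : ι → R} {i : ι} (hi : i ∈ s)
    (hfi : f i ≤ 0) (hf : ∀ j ∈ s, f j ≤ 1) :
    ∑ j ∈ s, f j ≤ s.card - 1 := by
  have hrest : ∑ j ∈ s.erase i, f j ≤ (s.erase i).card • (1 : R) :=
    Finset.sum_le_card_nsmul _ _ _ fun j hj ↦ hf j (Finset.mem_of_mem_erase hj)
  rw [Finset.card_erase_of_mem hi, nsmul_one, Nat.cast_pred (Finset.card_pos.mpr ⟨i, hi⟩)]
    at hrest
  calc ∑ j ∈ s, f j = f i + ∑ j ∈ s.erase i, f j := (Finset.add_sum_erase s f hi).symm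
    _ ≤ 0 + (s.card - 1) := add_le_add hfi hrest
    _ = s.card - 1 := zero_add _

/-- If the LGLS feasibility condition
`∑_{u ≠ v} max 0 (1 - w(u,v)) > |V| + N v - 2` holds for all `v` in the finite set `V`,
where `w ≥ 0`, `N ≥ 0`, and `w(u,v) = 1` whenever the links `u` and `v` share an
endpoint in the communication graph, then no two distinct links of `V` share a node. -/
theorem no_shared_nodes
    {ι Node : Type*} [DecidableEq ι] (V : Finset ι)
    (a b : ι → Node)  -- endpoints (transmitter and receiver) of each link
    (w : ι → ι → ℝ) (N : ι → ℝ)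
    (hw : ∀ u ∈ V, ∀ v ∈ V, u ≠ v → 0 ≤ w u v)
    (hN : ∀ v ∈ V, 0 ≤ N v)
    (hshare : ∀ u ∈ V, ∀ v ∈ V, u ≠ v →
      (a u = a v ∨ a u = b v ∨ b u = a v ∨ b u = b v) → w u v = 1)
    (h : ∀ v ∈ V,
      ∑ u ∈ V.erase v, max 0 (1 - w u v) > (V.card : ℝ) + N v - 2) :
    ∀ u ∈ V, ∀ v ∈ V, u ≠ v →
      ¬(a u = a v ∨ a u = b v ∨ b u = a v ∨ b u = b v) := by
  intro u hu v hv huv hshared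
  have hu' : u ∈ V.erase v := Finset.mem_erase.mpr ⟨huv, hu⟩
  have hsum : ∑ x ∈ V.erase v, max 0 (1 - w x v) ≤ (V.erase v).card - 1 := by
    refine Finset.sum_le_card_sub_one_of_le_one hu' ?_ fun x hx ↦ ?_
    · simp [hshare u hu v hv huv hshared]
    · obtain ⟨hxv, hx⟩ := Finset.mem_erase.mp hx
      exact max_le zero_le_one (by linarith [hw x hx v hv hxv])
  rw [Finset.card_erase_of_mem hv, Nat.cast_pred (Finset.card_pos.mpr ⟨v, hv⟩)] at hsum
  linarith [h v hv, hN v hv]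
end
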